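/- Let F : ℝⁿ → E be an n-dimensional spectral resolution on the perfect effect algebra E = Γ_ea(ℤ ×ₗ G,(1,0)). Extend F to arguments of the forms −∞, r, r⁺ (r ∈ ℝ) and +∞ in each coordinate by the conventions: the value with i-th argument r⁺ is the greatest lower bound of the values with i-th argument ranging over reals strictly greater than r; the value with i-th argument +∞ is the least upper bound over the i-th argument ranging over ℝ; the value with i-th argument −∞ is 0 (all these extended values exist and are unambiguous for a spectral resolution). Order these symbols by −∞ < r ≤ r⁺ < r' ≤ r'⁺ < +∞ whenever r < r' are reals. Then for any indices i₁ < ⋯ < i_k in {1,…,n} and any endpoints α_l ≤ β_l of the above forms (l = 1,…,k), the iterated difference Δ_{i₁}(α₁,β₁)⋯Δ_{i_k}(α_k,β_k)F(v̄) ≥ 0 for every choice v̄ of real values of the remaining coordinates, where Δᵢ(α,β)F is (the extension of F with i-th argument β) minus (the extension of F with i-th argument α). -/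

import Mathlib

open Classical

namespace Paper

/-- A po-group is directed. -/
def DirectedPO (G : Type*) [AddCommGroup G] [PartialOrder G] : Prop :=
  ∀ a b : G, ∃ c, a ≤ c ∧ b ≤ c

/-- The Riesz interpolation property for a po-group `G`. -/
def RieszInterp (G : Type*) [AddCommGroup G] [PartialOrder G] : Prop :=
  ∀ a₁ a₂ b₁ b₂ : G, a₁ ≤ b₁ → a₁ ≤ b₂ → a₂ ≤ b₁ → a₂ ≤ b₂ →
    ∃ c, (a₁ ≤ c ∧ a₂ ≤ c) ∧ (c ≤ b₁ ∧ c ≤ b₂)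

/-- Dedekind monotone σ-completeness of a po-group: every ascending sequence bounded above
has a supremum and every descending sequence bounded below has an infimum. -/
def MonSigmaComplete (G : Type*) [AddCommGroup G] [PartialOrder G] : Prop :=
  (∀ f : ℕ → G, Monotone f → BddAbove (Set.range f) → ∃ s, IsLUB (Set.range f) s) ∧
  (∀ f : ℕ → G, Antitone f → BddBelow (Set.range f) → ∃ s, IsGLB (Set.range f) s)

/-- Dedekind σ-completeness: every nonempty countable subset bounded above has a supremum. -/
def DedekindSC (G : Type*) [AddCommGroup G] [PartialOrder G] : Prop :=
  ∀ S : Set G, S.Nonempty → S.Countable → BddAbove S → ∃ s, IsLUB S s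

/-- The interval algebra `Γ(ℤ ×ₗ G,(k,0)) = {a : 0 ≤ a ≤ (k,0)}` in the lexicographic
product `ℤ ×ₗ G`. -/
def Ek (G : Type*) [AddCommGroup G] [PartialOrder G] (k : ℤ) : Set (ℤ ×ₗ G) :=
  Set.Icc 0 (toLex (k, (0 : G)))

/-- The iterated difference `Δ₁(a₁,b₁)⋯Δₙ(aₙ,bₙ)F`, written as the signed sum over all
corners of the box `[a,b)`; the sign is `(-1)^(number of coordinates set to the lower
endpoint)`. -/
def volSum {M : Type*} [AddCommGroup M] {ι : Type*} [Fintype ι] [DecidableEq ι]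
    (F : (ι → ℝ) → M) (a b : ι → ℝ) : M :=
  ∑ S : Finset ι, (-1 : ℤ) ^ (Fintype.card ι - S.card) •
    F (fun i => if i ∈ S then b i else a i)

variable {G : Type*} [AddCommGroup G] [PartialOrder G]
variable {ι : Type*} [Fintype ι] [DecidableEq ι]

/-- An `n`-dimensional pseudo spectral resolution with values in `Ek G k`:
the volume condition, left-continuity, vanishing along each coordinate, and the range
has a least upper bound in `Ek G k`. -/
structure IsPseudoSR (k : ℤ) (F : (ι → ℝ) → ℤ ×ₗ G) : Prop where
  mem : ∀ t, F t ∈ Ek G k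
  vol : ∀ a b : ι → ℝ, (∀ i, a i ≤ b i) → 0 ≤ volSum F a b
  leftCont : ∀ t, IsLUB (F '' {s | ∀ i, s i < t i}) (F t)
  coordZero : ∀ (i : ι) (t : ι → ℝ),
    IsGLB (Set.range fun r => F (Function.update t i r)) 0
  rangeSup : ∃ u ∈ Ek G k, IsLUB (Set.range F) u

/-- An `n`-dimensional spectral resolution on the perfect algebra `Γ(ℤ ×ₗ G,(1,0))`:
the volume condition, left-continuity, vanishing along each coordinate, total mass `(1,0)`,
and the characteristic-point condition (v). -/
structure IsSR1 (F : (ι → ℝ) → ℤ ×ₗ G) : Prop where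
  mem : ∀ t, F t ∈ Ek G 1
  vol : ∀ a b : ι → ℝ, (∀ i, a i ≤ b i) → 0 ≤ volSum F a b
  leftCont : ∀ t, IsLUB (F '' {s | ∀ i, s i < t i}) (F t)
  coordZero : ∀ (i : ι) (t : ι → ℝ),
    IsGLB (Set.range fun r => F (Function.update t i r)) 0
  total : IsLUB (Set.range F) (toLex (1, (0 : G)))
  charPt : ∃ t0 : ι → ℝ,
    (∀ s, (ofLex (F s)).1 = 1 ↔ ∀ i, t0 i < s i) ∧
    ∃ a ∈ Ek G 1, IsGLB (F '' {s | ∀ i, t0 i < s i}) a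

/-- A two-dimensional spectral resolution on the perfect algebra `Γ(ℤ ×ₗ G,(1,0))`. -/
structure IsSR2 (F : ℝ → ℝ → ℤ ×ₗ G) : Prop where
  mem : ∀ s t, F s t ∈ Ek G 1
  vol : ∀ a₁ b₁ a₂ b₂ : ℝ, a₁ ≤ b₁ → a₂ ≤ b₂ →
    0 ≤ F b₁ b₂ - F a₁ b₂ - F b₁ a₂ + F a₁ a₂
  leftCont : ∀ s t : ℝ, IsLUB {y | ∃ s' t' : ℝ, s' < s ∧ t' < t ∧ y = F s' t'} (F s t)
  coordZero₁ : ∀ s : ℝ, IsGLB (Set.range fun t => F s t) 0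
  coordZero₂ : ∀ t : ℝ, IsGLB (Set.range fun s => F s t) 0
  total : IsLUB {y | ∃ s t : ℝ, y = F s t} (toLex (1, (0 : G)))
  charPt : ∃ s₀ t₀ : ℝ,
    (∀ s t, (ofLex (F s t)).1 = 1 ↔ (s₀ < s ∧ t₀ < t)) ∧
    ∃ a ∈ Ek G 1, IsGLB {y | ∃ s t : ℝ, s₀ < s ∧ t₀ < t ∧ y = F s t} a

/-- An observable on `Γ(ℤ ×ₗ G,(k,0))` defined on the Borel (measurable) subsets of `X`. -/
def IsObs {X : Type*} [MeasurableSpace X] (k : ℤ) (x : Set X → ℤ ×ₗ G) : Prop :=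
  (∀ A, MeasurableSet A → x A ∈ Ek G k) ∧
  x Set.univ = toLex (k, (0 : G)) ∧
  (∀ A B : Set X, MeasurableSet A → MeasurableSet B → Disjoint A B →
    x (A ∪ B) = x A + x B) ∧
  (∀ A : ℕ → Set X, (∀ i, MeasurableSet (A i)) → Monotone A →
    IsLUB (Set.range fun i => x (A i)) (x (⋃ i, A i)))

end Paper

namespace Paper

/-- The extended real symbols `-∞`, `r`, `r⁺` (`r : ℝ`) and `+∞` used as arguments of
extended spectral resolutions. -/
inductive RHat : Type
  | bot : RHat
  | real : ℝ → RHat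
  | realPlus : ℝ → RHat
  | top : RHat

/-- The order `-∞ < r ≤ r⁺ < r' ≤ r'⁺ < +∞` (for reals `r < r'`) on the symbols `RHat`. -/
def RHat.le : RHat → RHat → Prop
  | .bot, _ => True
  | .real _, .bot => False
  | .real r, .real s => r ≤ s
  | .real r, .realPlus s => r ≤ s
  | .real _, .top => True
  | .realPlus _, .bot => False
  | .realPlus r, .real s => r < s
  | .realPlus r, .realPlus s => r ≤ s
  | .realPlus _, .top => True
  | .top, .top => True
  | .top, _ => False

variable {G : Type*} [AddCommGroup G] [PartialOrder G]
variable {ι : Type*} [Fintype ι] [DecidableEq ι]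

/-- `Fh` is the (unambiguous) extension of `F` to arguments in `RHat`:
it agrees with `F` on real arguments; at an argument `r⁺` it is the greatest lower
bound over real `i`-th arguments `> r`; at `+∞` it is the least upper bound over real
`i`-th arguments; at `-∞` it equals `0`. -/
def IsExtension (F : (ι → ℝ) → ℤ ×ₗ G) (Fh : (ι → RHat) → ℤ ×ₗ G) : Prop :=
  (∀ v : ι → ℝ, Fh (fun i => RHat.real (v i)) = F v) ∧
  (∀ (u : ι → RHat) (i : ι) (r : ℝ), u i = RHat.realPlus r →
    IsGLB {y | ∃ s : ℝ, r < s ∧ y = Fh (Function.update u i (RHat.real s))} (Fh u)) ∧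
  (∀ (u : ι → RHat) (i : ι), u i = RHat.top →
    IsLUB {y | ∃ s : ℝ, y = Fh (Function.update u i (RHat.real s))} (Fh u)) ∧
  (∀ (u : ι → RHat) (i : ι), u i = RHat.bot → Fh u = 0)

/-- The difference `Δᵢ(α,β)F`, viewed as a function of the remaining coordinates. -/
noncomputable def deltaFun (Fh : (ι → RHat) → ℤ ×ₗ G) (i : ι) (α β : RHat) :
    ({j : ι // j ≠ i} → ℝ) → ℤ ×ₗ G := fun s =>
  Fh (fun j => if h : j = i then β else RHat.real (s ⟨j, h⟩)) -
  Fh (fun j => if h : j = i then α else RHat.real (s ⟨j, h⟩))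

/-- `F'` has characteristic point `c`: `F'(v) ∈ {1} × G` iff `v ≫ c`. -/
def HasCP {κ : Type*} (F' : (κ → ℝ) → ℤ ×ₗ G) (c : κ → ℝ) : Prop :=
  ∀ v, ((ofLex (F' v)).1 = 1 ↔ ∀ j, c j < v j)

end Paper

/-!
The iterated differences of `F` itself are nonnegative over every sub-box: letting the
coordinates outside the sub-box tend to `-∞` turns the volume condition for the full box into
the one for the sub-box, because every corner with such a coordinate tends to `0`.

The extended symbols are then admitted one coordinate `i` at a time. As a function of its
`i`-th argument, an iterated difference is `P - N`, where `P` and `N` are sums of corner values;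
each corner value is monotone in a real argument and its values at `r⁺`, `+∞`, `-∞` are an
infimum, a supremum and `0`. Infima and suprema of monotone functions add up, so the same holds
for `P` and `N`, and nonnegativity and monotonicity of `P - N` on the reals (known by induction)
pass to all symbols, in the order `-∞ < r ≤ r⁺ < r' < +∞`.
-/

open Finset Function

namespace Paper

section Bounds

variable {M : Type*} [AddCommGroup M] [PartialOrder M] [IsOrderedAddMonoid M]
variable {α : Type*} [LinearOrder α]

theorem isGLB_image_add_of_monotone {f g : α → M} {S : Set α} (hf : Monotone f)
    (hg : Monotone g) {a b : M} (ha : IsGLB (f '' S) a) (hb : IsGLB (g '' S) b) :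
    IsGLB ((fun x => f x + g x) '' S) (a + b) := by
  refine ⟨?_, fun l hl => ?_⟩
  · rintro _ ⟨x, hx, rfl⟩
    exact add_le_add (ha.1 (Set.mem_image_of_mem f hx)) (hb.1 (Set.mem_image_of_mem g hx))
  have hle : ∀ y ∈ S, l - a ≤ g y := by
    intro y hy
    refine sub_le_comm.1 (ha.2 ?_)
    rintro _ ⟨x, hx, rfl⟩
    have hmin : min x y ∈ S := by rcases min_choice x y with h | h <;> rw [h] <;> assumption
    exact sub_le_iff_le_add.2 <| (hl (Set.mem_image_of_mem _ hmin)).trans <|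
      add_le_add (hf (min_le_left x y)) (hg (min_le_right x y))
  exact sub_le_iff_le_add'.1 (hb.2 (by rintro _ ⟨y, hy, rfl⟩; exact hle y hy))

theorem isLUB_image_add_of_monotone {f g : α → M} {S : Set α} (hf : Monotone f)
    (hg : Monotone g) {a b : M} (ha : IsLUB (f '' S) a) (hb : IsLUB (g '' S) b) :
    IsLUB ((fun x => f x + g x) '' S) (a + b) :=
  isGLB_image_add_of_monotone (M := Mᵒᵈ) (α := αᵒᵈ) hf.dual hg.dual ha hb

theorem isGLB_image_sum_of_monotone {κ : Type*} (s : Finset κ) {f : κ → α → M} {a : κ → M}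
    {S : Set α} (hS : S.Nonempty) (hf : ∀ k ∈ s, Monotone (f k))
    (ha : ∀ k ∈ s, IsGLB (f k '' S) (a k)) :
    IsGLB ((fun x => ∑ k ∈ s, f k x) '' S) (∑ k ∈ s, a k) := by
  classical
  induction s using Finset.induction_on with
  | empty => simp [hS.image_const]
  | insert j s hj ih =>
    simp only [sum_insert hj]
    refine isGLB_image_add_of_monotone (hf j (mem_insert_self j s))
      (fun x y hxy => sum_le_sum fun k hk => hf k (mem_insert_of_mem hk) hxy)
      (ha j (mem_insert_self j s)) ?_
    exact ih (fun k hk => hf k (mem_insert_of_mem hk)) (fun k hk => ha k (mem_insert_of_mem hk))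

theorem isLUB_image_sum_of_monotone {κ : Type*} (s : Finset κ) {f : κ → α → M} {a : κ → M}
    {S : Set α} (hS : S.Nonempty) (hf : ∀ k ∈ s, Monotone (f k))
    (ha : ∀ k ∈ s, IsLUB (f k '' S) (a k)) :
    IsLUB ((fun x => ∑ k ∈ s, f k x) '' S) (∑ k ∈ s, a k) :=
  isGLB_image_sum_of_monotone (M := Mᵒᵈ) (α := αᵒᵈ) s hS (fun k hk => (hf k hk).dual) ha

end Bounds

theorem sum_neg_one_pow_smul_eq_sub {M κ : Type*} [AddCommGroup M] (s : Finset κ) (e : κ → ℕ)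
    (f : κ → M) :
    ∑ k ∈ s, (-1 : ℤ) ^ e k • f k =
      ∑ k ∈ s with Even (e k), f k - ∑ k ∈ s with ¬Even (e k), f k := by
  rw [← sum_filter_add_sum_filter_not s (fun k => Even (e k)), sub_eq_add_neg,
    ← sum_neg_distrib]
  congr 1 <;> refine sum_congr rfl fun k hk => ?_ <;> rw [mem_filter] at hk
  · rw [hk.2.neg_one_pow, one_smul]
  · rw [(Nat.not_even_iff_odd.1 hk.2).neg_one_pow, neg_one_zsmul]

section IterDiff

variable {ι X M : Type*} [DecidableEq ι] [AddCommGroup M]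

/-- `Δ_{j ∈ J}(a j, b j) Φ`; coordinates outside `J` are read from `a`. -/
def iterDiff (Φ : (ι → X) → M) (J : Finset ι) (a b : ι → X) : M :=
  ∑ S ∈ J.powerset, (-1 : ℤ) ^ (J.card - S.card) • Φ (S.piecewise b a)

variable (Φ : (ι → X) → M)

@[simp]
theorem iterDiff_empty (a b : ι → X) : iterDiff Φ ∅ a b = Φ a := by
  simp [iterDiff]

theorem iterDiff_congr_right {J : Finset ι} {a b b' : ι → X} (h : ∀ j ∈ J, b j = b' j) :
    iterDiff Φ J a b = iterDiff Φ J a b' :=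
  sum_congr rfl fun S hS => by
    rw [S.piecewise_congr (fun j hj => h j (mem_powerset.1 hS hj)) fun _ _ => rfl]

theorem iterDiff_insert {J : Finset ι} {i : ι} (hi : i ∉ J) (a b : ι → X) :
    iterDiff Φ (insert i J) a b = iterDiff Φ J (update a i (b i)) b - iterDiff Φ J a b := by
  rw [iterDiff, sum_powerset_insert hi, add_comm, sub_eq_add_neg, iterDiff, iterDiff,
    ← sum_neg_distrib]
  congr 1 <;> refine sum_congr rfl fun S hS => ?_
  · have hiS : i ∉ S := fun h => hi (mem_powerset.1 hS h)
    rw [card_insert_of_notMem hi, card_insert_of_notMem hiS, piecewise_insert,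
      update_piecewise_of_notMem _ _ _ hiS, Nat.add_sub_add_right]
  · rw [card_insert_of_notMem hi, Nat.sub_add_comm (card_le_card (mem_powerset.1 hS)), pow_succ,
      mul_comm, mul_smul, neg_one_zsmul]

theorem iterDiff_insert_update {J : Finset ι} {i : ι} (hi : i ∉ J) (a b : ι → X) (x y : X) :
    iterDiff Φ (insert i J) (update a i x) (update b i y) =
      iterDiff Φ J (update a i y) (update b i y) - iterDiff Φ J (update a i x) (update b i x) := by
  have hb : ∀ z, ∀ j ∈ J, update b i y j = update b i z j := fun z j hj => by
    rw [update_of_ne (ne_of_mem_of_not_mem hj hi), update_of_ne (ne_of_mem_of_not_mem hj hi)]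
  rw [iterDiff_insert Φ hi, update_idem, update_self]
  exact congrArg _ (iterDiff_congr_right Φ (hb x))

theorem iterDiff_singleton_update (a : ι → X) (i : ι) (x y : X) :
    iterDiff Φ {i} (update a i x) (update a i y) = Φ (update a i y) - Φ (update a i x) := by
  simpa using iterDiff_insert_update Φ (notMem_empty i) a a x y

theorem iterDiff_update_eq_sub (J : Finset ι) (a b : ι → X) (i : ι) (x : X) :
    iterDiff Φ J (update a i x) (update b i x) =
      ∑ S ∈ J.powerset with Even (J.card - S.card), Φ (update (S.piecewise b a) i x) -
      ∑ S ∈ J.powerset with ¬Even (J.card - S.card), Φ (update (S.piecewise b a) i x) := by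
  simp only [iterDiff, ← update_piecewise]
  exact sum_neg_one_pow_smul_eq_sub _ _ _

end IterDiff

theorem monotone_of_isLUB_image_lt {ι M : Type*} [Preorder M] {F : (ι → ℝ) → M}
    (h : ∀ t, IsLUB (F '' {s | ∀ i, s i < t i}) (F t)) : Monotone F := by
  intro a b hab
  refine (h a).2 ?_
  rintro _ ⟨x, hx, rfl⟩
  exact (h b).1 ⟨x, fun i => (hx i).trans_le (hab i), rfl⟩

section RealBox

variable {ι M : Type*} [DecidableEq ι] [AddCommGroup M] [PartialOrder M] [IsOrderedAddMonoid M]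
variable {F : (ι → ℝ) → M} (hmono : Monotone F)
  (hzero : ∀ i t, IsGLB (Set.range fun r => F (update t i r)) 0)
include hmono hzero

theorem iterDiff_nonneg_of_insert {J : Finset ι} {i : ι} (hi : i ∉ J)
    (h : ∀ a b : ι → ℝ, (∀ j ∈ insert i J, a j ≤ b j) → 0 ≤ iterDiff F (insert i J) a b)
    {a b : ι → ℝ} (hab : ∀ j ∈ J, a j ≤ b j) : 0 ≤ iterDiff F J a b := by
  set P : ℝ → M := fun r =>
    ∑ S ∈ J.powerset with Even (J.card - S.card), F (update (S.piecewise b a) i r)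
  set N : ℝ → M := fun r =>
    ∑ S ∈ J.powerset with ¬Even (J.card - S.card), F (update (S.piecewise b a) i r)
  have hPN : ∀ r ≤ a i, P r - N r ≤ iterDiff F J a b := by
    intro r hr
    have hbox : ∀ j ∈ insert i J, update a i r j ≤ update b i (a i) j := by
      intro j hj
      rcases eq_or_ne j i with rfl | hji
      · simpa using hr
      · simpa [hji] using hab j ((mem_insert.1 hj).resolve_left hji)
    have := h _ _ hbox
    rw [iterDiff_insert_update F hi, update_eq_self, iterDiff_update_eq_sub,
      iterDiff_congr_right F fun j hj => update_of_ne (ne_of_mem_of_not_mem hj hi) _ _] at this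
    exact sub_nonneg.1 this
  have hP : ∀ r, 0 ≤ P r := fun r => sum_nonneg fun S _ => (hzero i _).1 ⟨r, rfl⟩
  have hN : IsGLB (Set.range N) 0 := by
    have := isGLB_image_sum_of_monotone (J.powerset.filter fun S => ¬Even (J.card - S.card))
      (f := fun S r => F (update (S.piecewise b a) i r)) (S := Set.univ) (a := fun _ => 0)
      Set.univ_nonempty
      (fun S _ => hmono.comp update_mono) (fun S _ => by simpa [Set.image_univ] using hzero i _)
    rwa [Set.image_univ, sum_const_zero] at this
  refine neg_nonpos.1 (hN.2 ?_)
  rintro _ ⟨r, rfl⟩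
  calc -iterDiff F J a b ≤ N (min r (a i)) - P (min r (a i)) :=
        neg_sub (P _) (N _) ▸ neg_le_neg (hPN _ (min_le_right _ _))
    _ ≤ N (min r (a i)) := sub_le_self _ (hP _)
    _ ≤ N r := sum_le_sum fun S _ => hmono (update_mono (min_le_left _ _))

theorem iterDiff_nonneg_of_volSum_nonneg [Fintype ι]
    (hvol : ∀ a b : ι → ℝ, (∀ i, a i ≤ b i) → 0 ≤ volSum F a b) (J : Finset ι) {a b : ι → ℝ}
    (hab : ∀ j ∈ J, a j ≤ b j) : 0 ≤ iterDiff F J a b := by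
  obtain ⟨T, rfl⟩ : ∃ T, J = Tᶜ := ⟨Jᶜ, (compl_compl J).symm⟩
  induction T using Finset.induction_on generalizing a b with
  | empty =>
    rw [compl_empty, iterDiff, powerset_univ, card_univ]
    exact hvol a b (by simpa using hab)
  | insert i T hi ih =>
    rw [compl_insert] at hab ⊢
    refine iterDiff_nonneg_of_insert hmono hzero (notMem_erase i _) (fun a' b' h => ?_) hab
    rw [insert_erase (mem_compl.2 hi)] at h ⊢
    exact ih h

end RealBox

section Symbols

variable {M : Type*} [AddCommGroup M] [PartialOrder M] [IsOrderedAddMonoid M]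

structure RHat.IsLimitExtension (f : RHat → M) : Prop where
  monotone_real : Monotone fun s => f (.real s)
  isGLB_realPlus : ∀ r, IsGLB ((fun s => f (.real s)) '' Set.Ioi r) (f (.realPlus r))
  isLUB_top : IsLUB (Set.range fun s => f (.real s)) (f .top)
  bot : f .bot = 0

namespace RHat.IsLimitExtension

theorem sum {κ : Type*} (s : Finset κ) {f : κ → RHat → M}
    (hf : ∀ k ∈ s, IsLimitExtension (f k)) : IsLimitExtension fun z => ∑ k ∈ s, f k z where
  monotone_real _ _ hxy := sum_le_sum fun k hk => (hf k hk).monotone_real hxy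
  isGLB_realPlus r := isGLB_image_sum_of_monotone s Set.nonempty_Ioi
    (fun k hk => (hf k hk).monotone_real) fun k hk => (hf k hk).isGLB_realPlus r
  isLUB_top := by
    simpa [Set.image_univ] using isLUB_image_sum_of_monotone s (S := Set.univ)
      Set.univ_nonempty (fun k hk => (hf k hk).monotone_real)
      fun k hk => by simpa [Set.image_univ] using (hf k hk).isLUB_top
  bot := sum_eq_zero fun k hk => (hf k hk).bot

variable {P N : RHat → M} (hP : IsLimitExtension P) (hN : IsLimitExtension N)
include hP hN

omit [IsOrderedAddMonoid M] in
theorem le_of_forall_real_le (h : ∀ s, N (.real s) ≤ P (.real s)) : ∀ z, N z ≤ P z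
  | .bot => by rw [hP.bot, hN.bot]
  | .real s => h s
  | .realPlus r => (hP.isGLB_realPlus r).2 <| by
      rintro _ ⟨s, hs, rfl⟩
      exact ((hN.isGLB_realPlus r).1 ⟨s, hs, rfl⟩).trans (h s)
  | .top => hN.isLUB_top.2 <| by
      rintro _ ⟨s, rfl⟩
      exact (h s).trans (hP.isLUB_top.1 ⟨s, rfl⟩)

theorem le_sub_realPlus {x : M} {r : ℝ} (h : ∀ s, r < s → x ≤ P (.real s) - N (.real s)) :
    x ≤ P (.realPlus r) - N (.realPlus r) := by
  rw [le_sub_iff_add_le]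
  refine (hP.isGLB_realPlus r).2 ?_
  rintro _ ⟨s, hs, rfl⟩
  exact (add_le_add le_rfl ((hN.isGLB_realPlus r).1 ⟨s, hs, rfl⟩)).trans
    (le_sub_iff_add_le.1 (h s hs))

theorem le_sub_top {x : M} {c : ℝ} (h : ∀ s, c < s → x ≤ P (.real s) - N (.real s)) :
    x ≤ P .top - N .top := by
  refine le_sub_comm.1 (hN.isLUB_top.2 ?_)
  rintro _ ⟨s, rfl⟩
  have hm := h (max s (c + 1)) ((lt_add_one c).trans_le (le_max_right _ _))
  calc N (.real s) ≤ N (.real (max s (c + 1))) := hN.monotone_real (le_max_left _ _)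
    _ ≤ P (.real (max s (c + 1))) - x := le_sub_comm.1 hm
    _ ≤ P .top - x := sub_le_sub_right (hP.isLUB_top.1 ⟨_, rfl⟩) x

variable (hmono : Monotone fun s => P (.real s) - N (.real s))
include hmono

theorem sub_realPlus_le_sub_real {a b : ℝ} (hab : a < b) :
    P (.realPlus a) - N (.realPlus a) ≤ P (.real b) - N (.real b) := by
  refine sub_le_comm.1 ((hN.isGLB_realPlus a).2 ?_)
  rintro _ ⟨s, hs, rfl⟩
  calc P (.realPlus a) - (P (.real b) - N (.real b))
      ≤ P (.real (min s b)) - (P (.real (min s b)) - N (.real (min s b))) :=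
        sub_le_sub ((hP.isGLB_realPlus a).1 ⟨_, lt_min hs hab, rfl⟩) (hmono (min_le_right s b))
    _ = N (.real (min s b)) := sub_sub_cancel _ _
    _ ≤ N (.real s) := hN.monotone_real (min_le_left s b)

theorem sub_le_sub_of_le (hpos : ∀ s, N (.real s) ≤ P (.real s)) :
    ∀ {x y : RHat}, x.le y → P x - N x ≤ P y - N y
  | .bot, y, _ => by
      rw [hP.bot, hN.bot, sub_zero]
      exact sub_nonneg.2 (le_of_forall_real_le hP hN hpos y)
  | .real _, .real _, h => hmono h
  | .real _, .realPlus _, h => le_sub_realPlus hP hN fun _ hs => hmono (h.trans hs.le)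
  | .real _, .top, _ => le_sub_top hP hN fun _ hs => hmono hs.le
  | .realPlus _, .real _, h => sub_realPlus_le_sub_real hP hN hmono h
  | .realPlus _, .realPlus _, h =>
      le_sub_realPlus hP hN fun _ hs => sub_realPlus_le_sub_real hP hN hmono (h.trans_lt hs)
  | .realPlus _, .top, _ => le_sub_top hP hN fun _ hs => sub_realPlus_le_sub_real hP hN hmono hs
  | .top, .top, _ => le_rfl
  | .real _, .bot, h | .realPlus _, .bot, h | .top, .bot, h | .top, .real _, h
  | .top, .realPlus _, h => h.elim

end RHat.IsLimitExtension

end Symbols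

section Extension

variable {G : Type*} [AddCommGroup G] [PartialOrder G] [IsOrderedAddMonoid G]
variable {ι : Type*} [DecidableEq ι]

def IterDiffNonnegWithSymbolsIn (Fh : (ι → RHat) → ℤ ×ₗ G) (T : Finset ι) : Prop :=
  ∀ (J : Finset ι) (α β : ι → RHat), (∀ j ∈ J, (α j).le (β j)) →
    (∀ j ∉ T, α j ∈ Set.range RHat.real ∧ β j ∈ Set.range RHat.real) → 0 ≤ iterDiff Fh J α β

variable {F : (ι → ℝ) → ℤ ×ₗ G} {Fh : (ι → RHat) → ℤ ×ₗ G} (hFh : IsExtension F Fh)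
include hFh

omit [IsOrderedAddMonoid G] in
theorem iterDiffNonnegWithSymbolsIn_empty
    (hF : ∀ (J : Finset ι) (a b : ι → ℝ), (∀ j ∈ J, a j ≤ b j) → 0 ≤ iterDiff F J a b) :
    IterDiffNonnegWithSymbolsIn Fh ∅ := by
  intro J α β hle hreal
  choose a ha using fun j => (hreal j (notMem_empty j)).1
  choose b hb using fun j => (hreal j (notMem_empty j)).2
  obtain rfl : (fun j => RHat.real (a j)) = α := funext ha
  obtain rfl : (fun j => RHat.real (b j)) = β := funext hb
  convert hF J a b hle using 2
  refine sum_congr rfl fun S _ => ?_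
  rw [← hFh.1]
  congr 2
  funext j
  by_cases hj : j ∈ S <;> simp [hj]

theorem isLimitExtension_update {T : Finset ι} (hT : IterDiffNonnegWithSymbolsIn Fh T) {i : ι}
    {c : ι → RHat} (hc : ∀ j ∉ insert i T, c j ∈ Set.range RHat.real) :
    RHat.IsLimitExtension fun z => Fh (update c i z) where
  monotone_real s s' hss' := by
    have h := hT {i} (update c i (.real s)) (update c i (.real s'))
      (fun j hj => by rw [mem_singleton.1 hj, update_self, update_self]; exact hss') fun j hj => by
        rcases eq_or_ne j i with rfl | hji
        · simp
        · simpa [hji] using hc j (by simp [hji, hj])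
    rwa [iterDiff_singleton_update, sub_nonneg] at h
  isGLB_realPlus r := by
    simpa [Set.image, eq_comm] using hFh.2.1 (update c i (.realPlus r)) i r (update_self ..)
  isLUB_top := by
    simpa [Set.range, eq_comm] using hFh.2.2.1 (update c i .top) i (update_self ..)
  bot := hFh.2.2.2 _ i (update_self ..)

theorem exists_isLimitExtension_sub_eq_iterDiff_update {T : Finset ι}
    (hT : IterDiffNonnegWithSymbolsIn Fh T) {i : ι} (K : Finset ι) {α β : ι → RHat}
    (hreal : ∀ j ∉ insert i T, α j ∈ Set.range RHat.real ∧ β j ∈ Set.range RHat.real) :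
    ∃ P N : RHat → ℤ ×ₗ G, RHat.IsLimitExtension P ∧ RHat.IsLimitExtension N ∧
      ∀ z, iterDiff Fh K (update α i z) (update β i z) = P z - N z := by
  have hcorner : ∀ S : Finset ι, ∀ j ∉ insert i T, S.piecewise β α j ∈ Set.range RHat.real :=
    fun S j hj => S.piecewise_cases β α (· ∈ Set.range RHat.real) (hreal j hj).2 (hreal j hj).1
  exact ⟨_, _, .sum _ fun S _ => isLimitExtension_update hFh hT (hcorner S),
    .sum _ fun S _ => isLimitExtension_update hFh hT (hcorner S),
    iterDiff_update_eq_sub Fh K α β i⟩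

theorem iterDiffNonnegWithSymbolsIn_insert {T : Finset ι} (hT : IterDiffNonnegWithSymbolsIn Fh T)
    {i : ι} : IterDiffNonnegWithSymbolsIn Fh (insert i T) := by
  intro J α β hle hreal
  set K := J.erase i
  obtain ⟨P, N, hP, hN, hPN⟩ := exists_isLimitExtension_sub_eq_iterDiff_update hFh hT K hreal
  have hreal_update : ∀ s s' : ℝ, ∀ j ∉ T, update α i (.real s) j ∈ Set.range RHat.real ∧
      update β i (.real s') j ∈ Set.range RHat.real := by
    intro s s' j hj
    rcases eq_or_ne j i with rfl | hji
    · simp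
    · simpa [hji] using hreal j (by simp [hji, hj])
  have hpos : ∀ s, N (.real s) ≤ P (.real s) := by
    intro s
    have h := hT K (update α i (.real s)) (update β i (.real s)) (fun j hj => by
      rw [update_of_ne (ne_of_mem_erase hj), update_of_ne (ne_of_mem_erase hj)]
      exact hle j (mem_of_mem_erase hj)) (hreal_update s s)
    rwa [hPN, sub_nonneg] at h
  have hmono : Monotone fun s => P (.real s) - N (.real s) := by
    intro s s' hss'
    have h := hT (insert i K) (update α i (.real s)) (update β i (.real s')) (fun j hj => by
      rcases eq_or_ne j i with rfl | hji
      · rw [update_self, update_self]; exact hss'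
      · rw [update_of_ne hji, update_of_ne hji]
        exact hle j (mem_of_mem_erase ((mem_insert.1 hj).resolve_left hji))) (hreal_update s s')
    rwa [iterDiff_insert_update _ (notMem_erase i J), hPN, hPN, sub_nonneg] at h
  by_cases hiJ : i ∈ J
  · have h := iterDiff_insert_update Fh (notMem_erase i J) α β (α i) (β i)
    rw [hPN, hPN, update_eq_self i α, update_eq_self i β, insert_erase hiJ] at h
    rw [h, sub_nonneg]
    exact hP.sub_le_sub_of_le hN hmono hpos (hle i hiJ)
  · have h : iterDiff Fh J α β = iterDiff Fh K (update α i (α i)) (update β i (α i)) := by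
      rw [update_eq_self i α, show K = J from erase_eq_of_notMem hiJ]
      exact iterDiff_congr_right Fh fun j hj =>
        (update_of_ne (ne_of_mem_of_not_mem hj hiJ) _ _).symm
    rw [h, hPN, sub_nonneg]
    exact hP.le_of_forall_real_le hN hpos (α i)

theorem iterDiff_nonneg_of_isExtension [Fintype ι]
    (hF : ∀ (J : Finset ι) (a b : ι → ℝ), (∀ j ∈ J, a j ≤ b j) → 0 ≤ iterDiff F J a b)
    {J : Finset ι} {α β : ι → RHat} (hle : ∀ j ∈ J, (α j).le (β j)) : 0 ≤ iterDiff Fh J α β := by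
  have hT : ∀ T, IterDiffNonnegWithSymbolsIn Fh T := by
    intro T
    induction T using Finset.induction_on with
    | empty => exact iterDiffNonnegWithSymbolsIn_empty hFh hF
    | insert i T _ hT => exact iterDiffNonnegWithSymbolsIn_insert hFh hT
  exact hT univ J α β hle (by simp)

end Extension

end Paper

open Paper in
theorem statement_7_general {G : Type*} [AddCommGroup G] [PartialOrder G]
    [CovariantClass G G (· + ·) (· ≤ ·)]
    {n : ℕ} (F : (Fin n → ℝ) → ℤ ×ₗ G) (hF : IsSR1 F)
    (Fh : (Fin n → RHat) → ℤ ×ₗ G) (hFh : IsExtension F Fh)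
    (J : Finset (Fin n)) (α β : Fin n → RHat)
    (hαβ : ∀ i ∈ J, (α i).le (β i)) (v : Fin n → ℝ) :
    0 ≤ ∑ S ∈ J.powerset, (-1 : ℤ) ^ (J.card - S.card) •
      Fh (fun i => if i ∈ S then β i else if i ∈ J then α i else RHat.real (v i)) := by
  have : IsOrderedAddMonoid G :=
    ⟨fun _ _ h _ => add_le_add h le_rfl, fun _ _ h _ => add_le_add le_rfl h⟩
  have hF_box := iterDiff_nonneg_of_volSum_nonneg (monotone_of_isLUB_image_lt hF.leftCont)
    hF.coordZero hF.vol
  show 0 ≤ iterDiff Fh J (J.piecewise α fun i => .real (v i)) β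
  exact iterDiff_nonneg_of_isExtension hFh hF_box fun i hi => by simpa [hi] using hαβ i hi

open Paper in
/-- Lemma 3.3: for an `n`-dimensional spectral resolution `F` on the
perfect effect algebra `Γ_ea(ℤ ×ₗ G,(1,0))` and its extension `Fh` to the symbols
`-∞, r, r⁺, +∞`, every iterated difference
`Δ_{i₁}(α₁,β₁)⋯Δ_{i_k}(α_k,β_k)F(v̄)` with extended endpoints `α_l ≤ β_l` is `≥ 0`. -/
theorem statement_7 {G : Type*} [AddCommGroup G] [PartialOrder G]
    [CovariantClass G G (· + ·) (· ≤ ·)]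
    (hdir : DirectedPO G) (hip : RieszInterp G) (hsc : MonSigmaComplete G)
    {n : ℕ} (F : (Fin n → ℝ) → ℤ ×ₗ G) (hF : IsSR1 F)
    (Fh : (Fin n → RHat) → ℤ ×ₗ G) (hFh : IsExtension F Fh)
    (J : Finset (Fin n)) (hJ : J.Nonempty) (α β : Fin n → RHat)
    (hαβ : ∀ i ∈ J, (α i).le (β i)) (v : Fin n → ℝ) :
    0 ≤ ∑ S ∈ J.powerset, (-1 : ℤ) ^ (J.card - S.card) •
      Fh (fun i => if i ∈ S then β i else if i ∈ J then α i else RHat.real (v i)) :=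
  statement_7_general F hF Fh hFh J α β hαβ v
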